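/- The congruence subgroup Γ⁰(2) of SL₂(ℤ) is generated by the matrices [[1,0],[1,1]] and [[1,2],[0,1]] together with −I. -/

import Mathlib

open Matrix

open scoped MatrixGroups

/-- `[[1,0],[1,1]]` as an element of `SL(2, ℤ)`. -/
def Lmat : SL(2, ℤ) := ⟨!![1, 0; 1, 1], by simp [Matrix.det_fin_two_of]⟩

/-- `[[1,2],[0,1]]` as an element of `SL(2, ℤ)`. -/
def T2mat : SL(2, ℤ) := ⟨!![1, 2; 0, 1], by simp [Matrix.det_fin_two_of]⟩

lemma T2_inv : (T2mat⁻¹ : SL(2, ℤ)).1 = !![1, -2; 0, 1] := by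
  rw [Matrix.SpecialLinearGroup.SL2_inv_expl]
  simp [T2mat]
  ext i j; fin_cases i <;> fin_cases j <;> simp [T2mat]

lemma L_inv : (Lmat⁻¹ : SL(2, ℤ)).1 = !![1, 0; -1, 1] := by
  rw [Matrix.SpecialLinearGroup.SL2_inv_expl]
  ext i j; fin_cases i <;> fin_cases j <;> simp [Lmat]

lemma T2_zpow (m : ℤ) : ((T2mat ^ m : SL(2, ℤ)) : Matrix (Fin 2) (Fin 2) ℤ) = !![1, 2*m; 0, 1] := by
  induction m using Int.induction_on with
  | zero => simp [Matrix.SpecialLinearGroup.coe_one, Matrix.one_fin_two]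
  | succ k ih =>
    rw [_root_.zpow_add_one, Matrix.SpecialLinearGroup.coe_mul, ih]
    show _ * T2mat.1 = _
    rw [T2mat, Matrix.mul_fin_two]
    norm_num; ring
  | pred k ih =>
    rw [_root_.zpow_sub_one, Matrix.SpecialLinearGroup.coe_mul, ih, T2_inv, Matrix.mul_fin_two]
    norm_num; ring

lemma L_zpow (n : ℤ) : ((Lmat ^ n : SL(2, ℤ)) : Matrix (Fin 2) (Fin 2) ℤ) = !![1, 0; n, 1] := by
  induction n using Int.induction_on with
  | zero => simp [Matrix.SpecialLinearGroup.coe_one, Matrix.one_fin_two]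
  | succ k ih =>
    rw [_root_.zpow_add_one, Matrix.SpecialLinearGroup.coe_mul, ih]
    show _ * Lmat.1 = _
    rw [Lmat, Matrix.mul_fin_two]
    norm_num
  | pred k ih =>
    rw [_root_.zpow_sub_one, Matrix.SpecialLinearGroup.coe_mul, ih, L_inv, Matrix.mul_fin_two]
    norm_num [sub_eq_add_neg]


/-- The subgroup of matrices with even upper-right entry. -/
def Gamma0two : Subgroup SL(2, ℤ) where
  carrier := {g | (2 : ℤ) ∣ (g : Matrix (Fin 2) (Fin 2) ℤ) 0 1}
  one_mem' := by simp [Matrix.SpecialLinearGroup.coe_one]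
  mul_mem' := by
    intro a b ha hb
    simp only [Set.mem_setOf_eq, Matrix.SpecialLinearGroup.coe_mul, Matrix.mul_apply,
      Fin.sum_univ_two] at *
    exact dvd_add (Dvd.dvd.mul_left hb _) (Dvd.dvd.mul_right ha _)
  inv_mem' := by
    intro a ha
    simp only [Set.mem_setOf_eq] at *
    rw [Matrix.SpecialLinearGroup.SL2_inv_expl]
    simpa using ha.neg_right

notation "Sgen" => Subgroup.closure ({Lmat, T2mat, -1} : Set SL(2, ℤ))

lemma L_mem : Lmat ∈ Sgen := Subgroup.subset_closure (by simp)
lemma T2_mem : T2mat ∈ Sgen := Subgroup.subset_closure (by simp)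
lemma neg_one_mem : (-1 : SL(2, ℤ)) ∈ Sgen := Subgroup.subset_closure (by simp)

lemma key : ∀ n : ℕ, ∀ g : SL(2, ℤ),
    ((g : Matrix (Fin 2) (Fin 2) ℤ) 1 0).natAbs = n →
    (2 : ℤ) ∣ (g : Matrix (Fin 2) (Fin 2) ℤ) 0 1 → g ∈ Sgen := by
  intro n
  induction n using Nat.strong_induction_on with
  | _ n IH =>
    intro g hn hb
    set a : ℤ := (g : Matrix (Fin 2) (Fin 2) ℤ) 0 0 with ha_def
    set b : ℤ := (g : Matrix (Fin 2) (Fin 2) ℤ) 0 1 with hb_def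
    set c : ℤ := (g : Matrix (Fin 2) (Fin 2) ℤ) 1 0 with hc_def
    set d : ℤ := (g : Matrix (Fin 2) (Fin 2) ℤ) 1 1 with hd_def
    have hdet : a * d - b * c = 1 := by
      have := g.2
      rw [Matrix.det_fin_two] at this
      linarith [this]
    obtain ⟨k, hk⟩ := hb
    have hg_eta : (g : Matrix (Fin 2) (Fin 2) ℤ) = !![a, b; c, d] :=
      Matrix.eta_fin_two _
    have ha_odd : Odd a := by
      rcases Int.even_or_odd a with he | ho
      · exfalso; obtain ⟨t, ht⟩ := he
        have h2 : (2:ℤ) * (t * d - k * c) = 1 := by rw [← hdet, ht, hk]; ring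
        omega
      · exact ho
    by_cases hc0 : c = 0
    · -- c = 0 : then a = d = ±1 and g is ± a power of T2mat
      have had : a * d = 1 := by rw [← hdet, hc0]; ring
      rcases Int.mul_eq_one_iff_eq_one_or_neg_one.mp had with ⟨ha1, hd1⟩ | ⟨ha1, hd1⟩
      · have hgeq : g = T2mat ^ k := by
          apply Subtype.ext
          rw [T2_zpow, hg_eta, ha1, hd1, hc0, hk]
        rw [hgeq]; exact zpow_mem T2_mem k
      · have hgeq : g = -1 * T2mat ^ (-k) := by
          apply Subtype.ext
          rw [Matrix.SpecialLinearGroup.coe_mul, T2_zpow, hg_eta, ha1, hd1, hc0, hk]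
          have hneg : ((-1 : SL(2, ℤ)) : Matrix (Fin 2) (Fin 2) ℤ) = -1 := by
            rw [Matrix.SpecialLinearGroup.coe_neg, Matrix.SpecialLinearGroup.coe_one]
          rw [hneg, neg_one_mul]
          norm_num
        rw [hgeq]; exact mul_mem neg_one_mem (zpow_mem T2_mem _)
    · -- c ≠ 0 : reduce
      set a' : ℤ := Int.bmod a (2 * c.natAbs) with ha'_def
      have hmodpos : 0 < 2 * c.natAbs := by
        have : c.natAbs ≠ 0 := Int.natAbs_ne_zero.mpr hc0
        omega
      have hub := Int.bmod_lt (x := a) hmodpos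
      have hlb := Int.le_bmod (x := a) hmodpos
      have hdvd := Int.dvd_bmod_sub_self (x := a) (m := 2 * c.natAbs)
      have hdvd2 : (2 * c) ∣ a' - a := by
        rw [show ((2 * c.natAbs : ℕ) : ℤ) = ((2 * c).natAbs : ℤ) by
          simp [Int.natAbs_mul]] at hdvd
        exact Int.natAbs_dvd.mp hdvd
      obtain ⟨m, hm⟩ := hdvd2
      obtain ⟨t, ht⟩ := ha_odd
      have haeven : (2:ℤ) ∣ a' - a := ⟨c * m, by rw [hm]; ring⟩
      have ha'_odd : a' ≠ 0 := by omega
      have ha'_le : a'.natAbs ≤ c.natAbs := by omega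
      set b1 : ℤ := b + 2 * m * d with hb1_def
      set g1 : SL(2, ℤ) := T2mat ^ m * g with hg1_def
      have hg1 : (g1 : Matrix (Fin 2) (Fin 2) ℤ) = !![a', b1; c, d] := by
        rw [hg1_def, Matrix.SpecialLinearGroup.coe_mul, T2_zpow, hg_eta,
          Matrix.mul_fin_two]
        have e1 : 1 * a + 2 * m * c = a' := by linarith [hm]
        have e2 : 1 * b + 2 * m * d = b1 := by rw [hb1_def]; ring
        have e3 : 0 * a + 1 * c = c := by ring
        have e4 : 0 * b + 1 * d = d := by ring
        rw [e1, e2, e3, e4]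
      -- second reduction
      set c' : ℤ := Int.bmod c a'.natAbs with hc'_def
      have hapos : 0 < a'.natAbs := Int.natAbs_pos.mpr ha'_odd
      have hub2 := Int.bmod_lt (x := c) hapos
      have hlb2 := Int.le_bmod (x := c) hapos
      have hdvd3 : a' ∣ c' - c :=
        Int.natAbs_dvd.mp (Int.dvd_bmod_sub_self (x := c) (m := a'.natAbs))
      obtain ⟨p, hp⟩ := hdvd3
      set g2 : SL(2, ℤ) := Lmat ^ p * g1 with hg2_def
      have hg2 : (g2 : Matrix (Fin 2) (Fin 2) ℤ) = !![a', b1; c', d + p * b1] := by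
        rw [hg2_def, Matrix.SpecialLinearGroup.coe_mul, L_zpow, hg1,
          Matrix.mul_fin_two]
        have e1 : 1 * a' + 0 * c = a' := by ring
        have e2 : 1 * b1 + 0 * d = b1 := by ring
        have e3 : p * a' + 1 * c = c' := by linarith [hp]
        have e4 : p * b1 + 1 * d = d + p * b1 := by ring
        rw [e1, e2, e3, e4]
      have hc'_lt : c'.natAbs < n := by
        rw [← hn]; omega
      have hg2_mem : g2 ∈ Sgen := by
        apply IH c'.natAbs hc'_lt g2
        · rw [hg2]; simp
        · rw [hg2]
          show (2:ℤ) ∣ b1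
          exact ⟨k + m * d, by rw [hb1_def, hk]; ring⟩
      have : g = (T2mat ^ m)⁻¹ * ((Lmat ^ p)⁻¹ * g2) := by
        rw [hg2_def, hg1_def]; group
      rw [this]
      exact mul_mem (inv_mem (zpow_mem T2_mem m))
        (mul_mem (inv_mem (zpow_mem L_mem p)) hg2_mem)


/-- `Γ⁰(2)`, the subgroup of matrices with even upper-right entry, is generated by
`[[1,0],[1,1]]` and `[[1,2],[0,1]]` together with `−I`. -/
theorem GammaUpper0_two_generators (g : SL(2, ℤ)) :
    g ∈ Subgroup.closure ({Lmat, T2mat, -1} : Set SL(2, ℤ)) ↔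
      ((g : Matrix (Fin 2) (Fin 2) ℤ) 0 1 : ZMod 2) = 0 := by
  constructor
  · intro hg
    have hle : Subgroup.closure ({Lmat, T2mat, -1} : Set SL(2, ℤ)) ≤ Gamma0two := by
      rw [Subgroup.closure_le]
      rintro x (rfl | rfl | rfl)
      · show (2:ℤ) ∣ (Lmat : Matrix (Fin 2) (Fin 2) ℤ) 0 1; simp [Lmat]
      · show (2:ℤ) ∣ (T2mat : Matrix (Fin 2) (Fin 2) ℤ) 0 1; simp [T2mat]
      · show (2:ℤ) ∣ ((-1 : SL(2, ℤ)) : Matrix (Fin 2) (Fin 2) ℤ) 0 1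
        rw [Matrix.SpecialLinearGroup.coe_neg, Matrix.SpecialLinearGroup.coe_one]
        simp
    have := hle hg
    exact (ZMod.intCast_zmod_eq_zero_iff_dvd ((g : Matrix (Fin 2) (Fin 2) ℤ) 0 1) 2).mpr this
  · intro hg
    exact key _ g rfl ((ZMod.intCast_zmod_eq_zero_iff_dvd _ 2).mp hg)
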